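/- Let H be a complex separable Hilbert space and let h₁, h₂ : D → B(H) be holomorphic functions such that Re h_j(z) := (h_j(z) + h_j(z)*)/2 is a positive operator for every z ∈ D and j = 1, 2, and such that h₁(z) + h₂(z) = ((1 + z)/(1 − z))·I for all z ∈ D. Then there exist self-adjoint operators A₁, A₂ ∈ B(H) and positive operators B₁, B₂ ∈ B(H) with B₁ + B₂ = I such that h_j(z) = i·A_j + ((1 + z)/(1 − z))·B_j for all z ∈ D and j = 1, 2. -/

import Mathlib

/-!
Testing the identity against vectors `x` reduces it to a scalar statement, since an operator on
a complex Hilbert space is determined by its quadratic form: if `f` is holomorphic on the disc and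
`0 ≤ Re f ≤ c Re φ` with `φ z = (1 + z) / (1 - z)`, then `f = f 0 + (φ - 1) Re f(0)`.

The Schwarz–Pick lemma for maps into the right half-plane, `|f'| (1 - |z|²) ≤ 2 Re f`, says that
`ψ = f' / φ'` satisfies `|ψ| Re φ ≤ Re f`. The same holds for `c φ - f`, whose `ψ` is `c - ψ`.
Adding, `|ψ| + |c - ψ| ≤ c`, which forces `ψ` to be real, hence constant by the open mapping
theorem; the two inequalities at `z = 0` identify the constant as `Re f(0)`.
-/

open Complex ComplexConjugate ContinuousLinearMap Metric Set

theorem Complex.im_eq_zero_of_norm_add_norm_sub_le {a : ℂ} {c : ℝ} (h : ‖a‖ + ‖c - a‖ ≤ c) :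
    a.im = 0 := by
  by_contra ha
  have h₁ := abs_re_lt_norm.2 ha
  have h₂ := abs_re_lt_norm.2 (show ((c : ℂ) - a).im ≠ 0 by simpa using ha)
  have h₃ := abs_add_le a.re (c - a.re)
  rw [add_sub_cancel] at h₃
  simp only [sub_re, ofReal_re] at h₂
  linarith [le_abs_self c]

theorem DifferentiableOn.eqOn_const_of_im_eq_zero {f : ℂ → ℂ} {U : Set ℂ}
    (hf : DifferentiableOn ℂ f U) (hU : IsOpen U) (hU' : IsPreconnected U)
    (him : ∀ z ∈ U, (f z).im = 0) {z₀ : ℂ} (hz₀ : z₀ ∈ U) : ∀ z ∈ U, f z = f z₀ := by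
  rcases (hf.analyticOnNhd hU).is_constant_or_isOpen hU' with ⟨w, hw⟩ | hopen
  · intro z hz
    rw [hw z hz, hw z₀ hz₀]
  · obtain ⟨ε, hε, hball⟩ := Metric.isOpen_iff.1 (hopen U subset_rfl hU) (f z₀) ⟨z₀, hz₀, rfl⟩
    obtain ⟨z, hz, hfz⟩ := hball (show f z₀ + (ε / 2 : ℝ) * I ∈ ball (f z₀) ε by
      simp [abs_of_pos hε, hε])
    have := him z hz
    rw [hfz] at this
    simp [him z₀ hz₀] at this
    linarith

theorem Complex.norm_sub_le_norm_add_conj {u a : ℂ} (hu : 0 ≤ u.re) (ha : 0 ≤ a.re) :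
    ‖u - a‖ ≤ ‖u + conj a‖ := by
  rw [← sq_le_sq₀ (norm_nonneg _) (norm_nonneg _), ← normSq_eq_norm_sq, ← normSq_eq_norm_sq]
  simp only [normSq_apply, sub_re, sub_im, add_re, add_im, conj_re, conj_im]
  nlinarith

theorem norm_deriv_mul_le_two_mul_re_of_re_pos {f : ℂ → ℂ} {c : ℂ} {R : ℝ} (hR : 0 < R)
    (hf : DifferentiableOn ℂ f (ball c R)) (hre : ∀ z ∈ ball c R, 0 < (f z).re) :
    ‖deriv f c‖ * R ≤ 2 * (f c).re := by
  have hc := mem_ball_self (x := c) hR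
  have ha : 0 < (f c).re := hre c hc
  have hden : ∀ z ∈ ball c R, f z + conj (f c) ≠ 0 := fun z hz h => by
    have := congrArg re h
    simp only [add_re, conj_re, zero_re] at this
    linarith [hre z hz]
  set G : ℂ → ℂ := fun z => (f z - (f c)) / (f z + conj (f c))
  have hG : DifferentiableOn ℂ G (ball c R) := fun z hz =>
    ((hf z hz).sub_const (f c)).div ((hf z hz).add_const _) (hden z hz)
  have hmaps : MapsTo G (ball c R) (closedBall (G c) 1) := by
    intro z hz
    rw [mem_closedBall, show G c = 0 by simp [G], dist_zero_right, norm_div,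
      div_le_one (norm_pos_iff.2 (hden z hz))]
    exact norm_sub_le_norm_add_conj (hre z hz).le ha.le
  have hderiv : HasDerivAt G (deriv f c / (2 * (f c).re)) c := by
    have hfc := hf.differentiableAt (isOpen_ball.mem_nhds hc)
    refine ((hfc.hasDerivAt.sub_const (f c)).div (hfc.hasDerivAt.add_const (conj (f c)))
      (hden c hc)).congr_deriv ?_
    have : ((f c).re : ℂ) ≠ 0 := ofReal_ne_zero.2 ha.ne'
    rw [sub_self, zero_mul, sub_zero, add_conj]
    push_cast
    field_simp
  have := norm_deriv_le_div_of_mapsTo_ball hG hmaps hR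
  rw [hderiv.deriv, norm_div, norm_mul, norm_real, Real.norm_of_nonneg ha.le,
    div_le_div_iff₀ (by norm_num; positivity) hR] at this
  norm_num at this
  linarith

theorem norm_deriv_mul_le_two_mul_re {f : ℂ → ℂ} {c : ℂ} {R : ℝ} (hR : 0 < R)
    (hf : DifferentiableOn ℂ f (ball c R)) (hre : ∀ z ∈ ball c R, 0 ≤ (f z).re) :
    ‖deriv f c‖ * R ≤ 2 * (f c).re := by
  refine le_of_forall_pos_le_add fun ε hε => ?_
  have := norm_deriv_mul_le_two_mul_re_of_re_pos hR (f := fun z => f z + (ε / 2 : ℝ))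
    (hf.add_const _) fun z hz => by simp only [add_re, ofReal_re]; linarith [hre z hz]
  simp only [deriv_add_const, add_re, ofReal_re] at this
  linarith

noncomputable def unitDiscShift (a w : ℂ) : ℂ := (w + a) / (1 + conj a * w)

theorem one_add_conj_mul_ne_zero {a w : ℂ} (ha : ‖a‖ < 1) (hw : ‖w‖ < 1) :
    1 + conj a * w ≠ 0 := fun h => by
  have : ‖conj a * w‖ < 1 := by
    rw [norm_mul, RCLike.norm_conj]
    nlinarith [norm_nonneg a, norm_nonneg w]
  rw [eq_neg_of_add_eq_zero_right h] at this
  simp at this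

theorem unitDiscShift_mapsTo {a : ℂ} (ha : ‖a‖ < 1) :
    MapsTo (unitDiscShift a) (ball 0 1) (ball 0 1) := by
  intro w hw
  rw [mem_ball_zero_iff] at hw ⊢
  have hden := one_add_conj_mul_ne_zero ha hw
  rw [unitDiscShift, norm_div, div_lt_one (norm_pos_iff.2 hden),
    ← sq_lt_sq₀ (norm_nonneg _) (norm_nonneg _), ← normSq_eq_norm_sq, ← normSq_eq_norm_sq]
  have key : normSq (1 + conj a * w) - normSq (w + a) = (1 - normSq w) * (1 - normSq a) := by
    simp only [normSq_apply, add_re, add_im, mul_re, mul_im, one_re, one_im, conj_re, conj_im]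
    ring
  have : normSq a < 1 := by rw [normSq_eq_norm_sq]; nlinarith [norm_nonneg a]
  have : normSq w < 1 := by rw [normSq_eq_norm_sq]; nlinarith [norm_nonneg w]
  nlinarith

theorem differentiableOn_unitDiscShift {a : ℂ} (ha : ‖a‖ < 1) :
    DifferentiableOn ℂ (unitDiscShift a) (ball 0 1) := fun _ hw =>
  ((differentiableWithinAt_id.add_const a).div
    ((differentiableWithinAt_id.const_mul _).const_add 1)
    (one_add_conj_mul_ne_zero ha (mem_ball_zero_iff.1 hw)))

theorem hasDerivAt_unitDiscShift_zero (a : ℂ) :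
    HasDerivAt (unitDiscShift a) (1 - normSq a) 0 := by
  refine (((hasDerivAt_id 0).add_const a).div
    (((hasDerivAt_id 0).const_mul (conj a)).const_add 1) (by simp)).congr_deriv ?_
  simp [mul_conj]

theorem norm_deriv_mul_one_sub_sq_le {f : ℂ → ℂ} (hf : DifferentiableOn ℂ f (ball 0 1))
    (hre : ∀ z ∈ ball (0 : ℂ) 1, 0 ≤ (f z).re) {z : ℂ} (hz : z ∈ ball 0 1) :
    ‖deriv f z‖ * (1 - ‖z‖ ^ 2) ≤ 2 * (f z).re := by
  have hz' := mem_ball_zero_iff.1 hz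
  have h0 : unitDiscShift z 0 = z := by simp [unitDiscShift]
  have hcomp : HasDerivAt (f ∘ unitDiscShift z) (deriv f z * (1 - normSq z)) 0 := by
    refine HasDerivAt.comp 0 ?_ (hasDerivAt_unitDiscShift_zero z)
    rw [h0]
    exact (hf.differentiableAt (isOpen_ball.mem_nhds hz)).hasDerivAt
  have := norm_deriv_mul_le_two_mul_re one_pos
    (hf.comp (differentiableOn_unitDiscShift hz') (unitDiscShift_mapsTo hz'))
    fun w hw => hre _ (unitDiscShift_mapsTo hz' hw)
  rw [hcomp.deriv, norm_mul, normSq_eq_norm_sq, mul_one, Function.comp_apply, h0] at this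
  norm_cast at this
  rwa [Real.norm_of_nonneg (by nlinarith [norm_nonneg z])] at this

theorem one_sub_ne_zero_of_mem_ball {z : ℂ} (hz : z ∈ ball (0 : ℂ) 1) : 1 - z ≠ 0 :=
  sub_ne_zero.2 fun h => by simp [← h] at hz

theorem hasDerivAt_one_add_div_one_sub {z : ℂ} (hz : 1 - z ≠ 0) :
    HasDerivAt (fun z => (1 + z) / (1 - z)) (2 / (1 - z) ^ 2) z := by
  refine (((hasDerivAt_id z).const_add 1).div ((hasDerivAt_id z).const_sub 1) hz).congr_deriv ?_
  simp only [id]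
  ring

theorem re_one_add_div_one_sub (z : ℂ) :
    ((1 + z) / (1 - z)).re = (1 - ‖z‖ ^ 2) / ‖1 - z‖ ^ 2 := by
  rw [div_re, ← normSq_eq_norm_sq, ← normSq_eq_norm_sq]
  simp only [add_re, add_im, sub_re, sub_im, one_re, one_im, normSq_apply]
  ring

theorem re_one_add_div_one_sub_pos {z : ℂ} (hz : z ∈ ball (0 : ℂ) 1) :
    0 < ((1 + z) / (1 - z)).re := by
  have := mem_ball_zero_iff.1 hz
  have := norm_pos_iff.2 (one_sub_ne_zero_of_mem_ball hz)
  rw [re_one_add_div_one_sub]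
  exact div_pos (by nlinarith [norm_nonneg z]) (by positivity)

/-- `f' / φ'` for `φ z = (1 + z) / (1 - z)`: the derivative of `f ∘ φ⁻¹` on the right
half-plane. -/
noncomputable def halfPlaneDeriv (f : ℂ → ℂ) (z : ℂ) : ℂ := deriv f z * (1 - z) ^ 2 / 2

theorem norm_halfPlaneDeriv_mul_re_le {f : ℂ → ℂ}
    (hf : DifferentiableOn ℂ f (ball 0 1)) (hre : ∀ z ∈ ball (0 : ℂ) 1, 0 ≤ (f z).re)
    {z : ℂ} (hz : z ∈ ball 0 1) :
    ‖halfPlaneDeriv f z‖ * ((1 + z) / (1 - z)).re ≤ (f z).re := by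
  have h1z : 0 < ‖1 - z‖ := norm_pos_iff.2 (one_sub_ne_zero_of_mem_ball hz)
  rw [halfPlaneDeriv, re_one_add_div_one_sub, norm_div, norm_mul, norm_pow, RCLike.norm_ofNat]
  field_simp
  linarith [norm_deriv_mul_one_sub_sq_le hf hre hz]

theorem halfPlaneDeriv_const_mul_sub {f : ℂ → ℂ} {z : ℂ} (hf : DifferentiableAt ℂ f z)
    (hz : 1 - z ≠ 0) (c : ℂ) :
    halfPlaneDeriv (fun z => c * ((1 + z) / (1 - z)) - f z) z = c - halfPlaneDeriv f z := by
  have hd : HasDerivAt (fun z => c * ((1 + z) / (1 - z)) - f z)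
      (c * (2 / (1 - z) ^ 2) - deriv f z) z :=
    ((hasDerivAt_one_add_div_one_sub hz).const_mul c).sub hf.hasDerivAt
  rw [halfPlaneDeriv, halfPlaneDeriv, hd.deriv]
  field_simp

theorem halfPlaneDeriv_eq_re {f : ℂ → ℂ} {c : ℝ}
    (hf : DifferentiableOn ℂ f (ball 0 1)) (hre : ∀ z ∈ ball (0 : ℂ) 1, 0 ≤ (f z).re)
    (hle : ∀ z ∈ ball (0 : ℂ) 1, (f z).re ≤ c * ((1 + z) / (1 - z)).re) :
    ∀ z ∈ ball (0 : ℂ) 1, halfPlaneDeriv f z = (f 0).re := by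
  have hφ : DifferentiableOn ℂ (fun z : ℂ => (1 + z) / (1 - z)) (ball 0 1) := fun z hz =>
    (hasDerivAt_one_add_div_one_sub (one_sub_ne_zero_of_mem_ball hz)).differentiableAt
      |>.differentiableWithinAt
  have hbound : ∀ z ∈ ball (0 : ℂ) 1,
      ‖halfPlaneDeriv f z‖ * ((1 + z) / (1 - z)).re ≤ (f z).re ∧
      ‖c - halfPlaneDeriv f z‖ * ((1 + z) / (1 - z)).re ≤
        c * ((1 + z) / (1 - z)).re - (f z).re := by
    intro z hz
    refine ⟨norm_halfPlaneDeriv_mul_re_le hf hre hz, ?_⟩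
    have := norm_halfPlaneDeriv_mul_re_le (f := fun z => c * ((1 + z) / (1 - z)) - f z)
      ((hφ.const_mul _).sub hf)
      (fun w hw => by simpa using hle w hw) hz
    rwa [halfPlaneDeriv_const_mul_sub (hf.differentiableAt (isOpen_ball.mem_nhds hz))
      (one_sub_ne_zero_of_mem_ball hz), sub_re, re_ofReal_mul] at this
  have hreal : ∀ z ∈ ball (0 : ℂ) 1, (halfPlaneDeriv f z).im = 0 := fun z hz =>
    im_eq_zero_of_norm_add_norm_sub_le (c := c) <| le_of_mul_le_mul_right
      (by linarith [hbound z hz]) (re_one_add_div_one_sub_pos hz)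
  have h0 : (0 : ℂ) ∈ ball (0 : ℂ) 1 := mem_ball_self one_pos
  have hψ0 : halfPlaneDeriv f 0 = (f 0).re := by
    obtain ⟨h1, h2⟩ := hbound 0 h0
    simp only [add_zero, sub_zero, div_one, one_re, mul_one] at h1 h2
    have h3 := re_le_norm (c - halfPlaneDeriv f 0)
    rw [sub_re, ofReal_re] at h3
    apply Complex.ext <;> simp only [ofReal_re, ofReal_im, hreal 0 h0]
    linarith [re_le_norm (halfPlaneDeriv f 0)]
  intro z hz
  rw [← hψ0]
  exact (((hf.deriv isOpen_ball).mul (by fun_prop)).div_const 2).eqOn_const_of_im_eq_zero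
    isOpen_ball (convex_ball 0 1).isPreconnected hreal h0 z hz

theorem eq_add_mul_re_of_re_le {f : ℂ → ℂ} {c : ℝ}
    (hf : DifferentiableOn ℂ f (ball 0 1)) (hre : ∀ z ∈ ball (0 : ℂ) 1, 0 ≤ (f z).re)
    (hle : ∀ z ∈ ball (0 : ℂ) 1, (f z).re ≤ c * ((1 + z) / (1 - z)).re) :
    ∀ z ∈ ball (0 : ℂ) 1, f z = f 0 + ((1 + z) / (1 - z) - 1) * (f 0).re := by
  set F : ℂ → ℂ := fun z => f z - (f 0).re * ((1 + z) / (1 - z))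
  have hF : ∀ z ∈ ball (0 : ℂ) 1, HasDerivAt F 0 z := by
    intro z hz
    have h1z := one_sub_ne_zero_of_mem_ball hz
    refine ((hf.differentiableAt (isOpen_ball.mem_nhds hz)).hasDerivAt.sub
      ((hasDerivAt_one_add_div_one_sub h1z).const_mul _)).congr_deriv ?_
    rw [← halfPlaneDeriv_eq_re hf hre hle z hz, halfPlaneDeriv]
    field_simp
    ring
  intro z hz
  have := isOpen_ball.is_const_of_deriv_eq_zero (convex_ball 0 1).isPreconnected
    (fun w hw => (hF w hw).differentiableAt.differentiableWithinAt)
    (fun w hw => (hF w hw).deriv) hz (mem_ball_self one_pos)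
  simp only [F] at this
  norm_num at this
  linear_combination this

open scoped InnerProductSpace ComplexStarModule

section Operator

variable {H : Type*} [NormedAddCommGroup H] [InnerProductSpace ℂ H]

theorem ContinuousLinearMap.ext_inner_self {S T : H →L[ℂ] H}
    (h : ∀ x, ⟪x, S x⟫_ℂ = ⟪x, T x⟫_ℂ) : S = T :=
  coe_injective <| (ext_inner_map _ _).1 fun x => by
    rw [coe_coe, coe_coe, ← inner_conj_symm, h, inner_conj_symm]

variable [CompleteSpace H]

theorem ContinuousLinearMap.inner_half_smul_add_adjoint_apply (T : H →L[ℂ] H) (x : H) :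
    ⟪x, ((1 / 2 : ℂ) • (T + adjoint T)) x⟫_ℂ = (⟪x, T x⟫_ℂ).re := by
  rw [smul_apply, add_apply, inner_smul_right, inner_add_right, adjoint_inner_right,
    ← inner_conj_symm (T x) x, add_conj]
  push_cast
  ring

theorem ContinuousLinearMap.half_smul_add_adjoint_add_I_smul_imaginaryPart (T : H →L[ℂ] H) :
    (1 / 2 : ℂ) • (T + adjoint T) + I • (ℑ T : H →L[ℂ] H) = T := by
  conv_rhs => rw [← realPart_add_I_smul_imaginaryPart T]
  rw [realPart_apply_coe, star_eq_adjoint, ← coe_smul]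
  norm_num

theorem ContinuousLinearMap.re_inner_apply_nonneg_of_isPositive {T : H →L[ℂ] H}
    (hT : ((1 / 2 : ℂ) • (T + adjoint T)).IsPositive) (x : H) : 0 ≤ (⟪x, T x⟫_ℂ).re := by
  simpa only [inner_half_smul_add_adjoint_apply, RCLike.re_to_complex, ofReal_re]
    using hT.re_inner_nonneg_right x

theorem eq_I_smul_imaginaryPart_add_smul_of_isPositive (h k : ℂ → H →L[ℂ] H)
    (hd : ∀ z ∈ ball (0 : ℂ) 1, DifferentiableAt ℂ h z)
    (hreh : ∀ z ∈ ball (0 : ℂ) 1, ((1 / 2 : ℂ) • (h z + adjoint (h z))).IsPositive)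
    (hrek : ∀ z ∈ ball (0 : ℂ) 1, ((1 / 2 : ℂ) • (k z + adjoint (k z))).IsPositive)
    (hsum : ∀ z ∈ ball (0 : ℂ) 1, h z + k z = ((1 + z) / (1 - z)) • (1 : H →L[ℂ] H)) :
    ∀ z ∈ ball (0 : ℂ) 1, h z = I • (ℑ (h 0) : H →L[ℂ] H) +
      ((1 + z) / (1 - z)) • ((1 / 2 : ℂ) • (h 0 + adjoint (h 0))) := by
  intro z hz
  have hdecomp := half_smul_add_adjoint_add_I_smul_imaginaryPart (h 0)
  set B := (1 / 2 : ℂ) • (h 0 + adjoint (h 0)) with hB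
  suffices h z = h 0 + ((1 + z) / (1 - z) - 1) • B by
    rw [this]
    conv_lhs => rw [← hdecomp]
    module
  refine ext_inner_self fun x => ?_
  have hsum_x : ∀ w ∈ ball (0 : ℂ) 1,
      ⟪x, h w x⟫_ℂ + ⟪x, k w x⟫_ℂ = (1 + w) / (1 - w) * (‖x‖ ^ 2 : ℝ) := by
    intro w hw
    rw [← inner_add_right, ← add_apply, hsum w hw, smul_apply, one_apply_eq_self, inner_smul_right,
      inner_self_eq_norm_sq_to_K]
    norm_cast
  have key := eq_add_mul_re_of_re_le (f := fun w => ⟪x, h w x⟫_ℂ) (c := ‖x‖ ^ 2)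
    (fun w hw => (((innerSL ℂ x).comp (apply ℂ H x)).differentiableAt.comp w
      (hd w hw)).differentiableWithinAt)
    (fun w hw => re_inner_apply_nonneg_of_isPositive (hreh w hw) x)
    (fun w hw => by
      have := congrArg re (hsum_x w hw)
      rw [add_re, re_mul_ofReal] at this
      linarith [re_inner_apply_nonneg_of_isPositive (hrek w hw) x]) z hz
  rw [key, add_apply, smul_apply, inner_add_right, inner_smul_right, hB,
    inner_half_smul_add_adjoint_apply]

end Operator

theorem stmt_7_general {H : Type*} [NormedAddCommGroup H] [InnerProductSpace ℂ H]
    [CompleteSpace H]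
    (h₁ h₂ : ℂ → H →L[ℂ] H)
    (hd₁ : ∀ z ∈ Metric.ball (0 : ℂ) 1, DifferentiableAt ℂ h₁ z)
    (hd₂ : ∀ z ∈ Metric.ball (0 : ℂ) 1, DifferentiableAt ℂ h₂ z)
    (hre₁ : ∀ z ∈ Metric.ball (0 : ℂ) 1,
      ((1 / 2 : ℂ) • (h₁ z + adjoint (h₁ z))).IsPositive)
    (hre₂ : ∀ z ∈ Metric.ball (0 : ℂ) 1,
      ((1 / 2 : ℂ) • (h₂ z + adjoint (h₂ z))).IsPositive)
    (hsum : ∀ z ∈ Metric.ball (0 : ℂ) 1,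
      h₁ z + h₂ z = ((1 + z) / (1 - z)) • (1 : H →L[ℂ] H)) :
    ∃ A₁ A₂ B₁ B₂ : H →L[ℂ] H,
      IsSelfAdjoint A₁ ∧ IsSelfAdjoint A₂ ∧
      B₁.IsPositive ∧ B₂.IsPositive ∧ B₁ + B₂ = 1 ∧
      (∀ z ∈ Metric.ball (0 : ℂ) 1,
        h₁ z = Complex.I • A₁ + ((1 + z) / (1 - z)) • B₁) ∧
      (∀ z ∈ Metric.ball (0 : ℂ) 1,
        h₂ z = Complex.I • A₂ + ((1 + z) / (1 - z)) • B₂) := by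
  have h0 : (0 : ℂ) ∈ ball (0 : ℂ) 1 := mem_ball_self one_pos
  have hsum0 : h₁ 0 + h₂ 0 = 1 := by simpa using hsum 0 h0
  refine ⟨ℑ (h₁ 0), ℑ (h₂ 0), _, _, (ℑ (h₁ 0)).prop, (ℑ (h₂ 0)).prop, hre₁ 0 h0, hre₂ 0 h0, ?_,
    eq_I_smul_imaginaryPart_add_smul_of_isPositive h₁ h₂ hd₁ hre₁ hre₂ hsum,
    eq_I_smul_imaginaryPart_add_smul_of_isPositive h₂ h₁ hd₂ hre₂ hre₁
      fun z hz => (add_comm _ _).trans (hsum z hz)⟩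
  rw [← smul_add, add_add_add_comm, ← map_add, hsum0, ← star_eq_adjoint, star_one,
    ← two_smul ℂ, smul_smul]
  norm_num

/-- Operator Herglotz consequence: if `h₁, h₂ : D → B(H)` are holomorphic with positive
real parts and `h₁(z) + h₂(z) = ((1+z)/(1-z)) • I`, then there are self-adjoint `A₁, A₂`
and positive `B₁, B₂` with `B₁ + B₂ = I` such that
`h_j(z) = i • A_j + ((1+z)/(1-z)) • B_j` on the disc. -/
theorem stmt_7 {H : Type*} [NormedAddCommGroup H] [InnerProductSpace ℂ H]
    [CompleteSpace H] [TopologicalSpace.SeparableSpace H]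
    (h₁ h₂ : ℂ → H →L[ℂ] H)
    (hd₁ : ∀ z ∈ Metric.ball (0 : ℂ) 1, DifferentiableAt ℂ h₁ z)
    (hd₂ : ∀ z ∈ Metric.ball (0 : ℂ) 1, DifferentiableAt ℂ h₂ z)
    (hre₁ : ∀ z ∈ Metric.ball (0 : ℂ) 1,
      ((1 / 2 : ℂ) • (h₁ z + adjoint (h₁ z))).IsPositive)
    (hre₂ : ∀ z ∈ Metric.ball (0 : ℂ) 1,
      ((1 / 2 : ℂ) • (h₂ z + adjoint (h₂ z))).IsPositive)
    (hsum : ∀ z ∈ Metric.ball (0 : ℂ) 1,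
      h₁ z + h₂ z = ((1 + z) / (1 - z)) • (1 : H →L[ℂ] H)) :
    ∃ A₁ A₂ B₁ B₂ : H →L[ℂ] H,
      IsSelfAdjoint A₁ ∧ IsSelfAdjoint A₂ ∧
      B₁.IsPositive ∧ B₂.IsPositive ∧ B₁ + B₂ = 1 ∧
      (∀ z ∈ Metric.ball (0 : ℂ) 1,
        h₁ z = Complex.I • A₁ + ((1 + z) / (1 - z)) • B₁) ∧
      (∀ z ∈ Metric.ball (0 : ℂ) 1,
        h₂ z = Complex.I • A₂ + ((1 + z) / (1 - z)) • B₂) :=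
  stmt_7_general h₁ h₂ hd₁ hd₂ hre₁ hre₂ hsum
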